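/- Pairing of probabilities for the half-line walk: for θ ≠ 0, π and all t ≥ 1, 1 ≤ m ≤ t-1, P(X_{2t}^{HL} = 2(t-m)) = P(X_{2t}^{HL} = 2(t-m)-1), and for all t ≥ 0, 1 ≤ m ≤ t, P(X_{2t+1}^{HL} = 2(t-m)+1) = P(X_{2t+1}^{HL} = 2(t-m)); i.e. the probability distribution P(X_t^{HL}=·) takes equal values on consecutive position pairs determined by the parity of t. -/

import Mathlib

/-!
At every time `t`, whenever `x + t` is odd both amplitudes at `x + 1` are `-i` times those
at `x`, and for even `t` the reflecting boundary satisfies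
`β_t(0) = i α_t(0)`. Both relations hold for the initial state and are preserved by one step
of the walk (at the boundary because `i² = -1`), and `|-i| = 1` turns the first one into the
pairing of probabilities.
-/

noncomputable def halfWalk (θ : ℝ) : ℕ → (ℕ → ℂ) × (ℕ → ℂ)
  | 0 =>
      (fun x => if x = 0 then Complex.exp (-(θ : ℂ) * Complex.I) / (Real.sqrt 2 : ℂ) else 0,
       fun x => if x = 0 then Complex.I * Complex.exp (-(θ : ℂ) * Complex.I) / (Real.sqrt 2 : ℂ) else 0)
  | t + 1 =>
      (fun x => (Real.cos θ : ℂ) * (halfWalk θ t).1 (x + 1) + (Real.sin θ : ℂ) * (halfWalk θ t).2 (x + 1),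
       fun x =>
         if x = 0 then (Real.cos θ : ℂ) * (halfWalk θ t).1 0 + (Real.sin θ : ℂ) * (halfWalk θ t).2 0
         else (Real.sin θ : ℂ) * (halfWalk θ t).1 (x - 1) - (Real.cos θ : ℂ) * (halfWalk θ t).2 (x - 1))

open Complex

/-- `p` stands for the time (only its parity matters) at which the state `ψ = (α, β)` is taken. -/
def IsPairedAt (p : ℕ) (ψ : (ℕ → ℂ) × (ℕ → ℂ)) : Prop :=
  (∀ x, Odd (x + p) → ψ.1 (x + 1) = -I * ψ.1 x ∧ ψ.2 (x + 1) = -I * ψ.2 x) ∧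
  (Even p → ψ.2 0 = I * ψ.1 0)

noncomputable def halfWalkProb (θ : ℝ) (t x : ℕ) : ℝ :=
  ‖(halfWalk θ t).1 x‖ ^ 2 + ‖(halfWalk θ t).2 x‖ ^ 2

section

variable (θ : ℝ) (t x : ℕ)

theorem halfWalk_succ_fst :
    (halfWalk θ (t + 1)).1 x
      = Real.cos θ * (halfWalk θ t).1 (x + 1) + Real.sin θ * (halfWalk θ t).2 (x + 1) :=
  rfl

theorem halfWalk_succ_snd_zero :
    (halfWalk θ (t + 1)).2 0 = Real.cos θ * (halfWalk θ t).1 0 + Real.sin θ * (halfWalk θ t).2 0 :=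
  rfl

theorem halfWalk_succ_snd_succ :
    (halfWalk θ (t + 1)).2 (x + 1)
      = Real.sin θ * (halfWalk θ t).1 x - Real.cos θ * (halfWalk θ t).2 x :=
  rfl

end

theorem isPairedAt_halfWalk_zero (θ : ℝ) : IsPairedAt 0 (halfWalk θ 0) := by
  refine ⟨fun x hx => ?_, fun _ => ?_⟩
  · have hx0 : x ≠ 0 := by rintro rfl; exact Nat.not_odd_zero hx
    simp [halfWalk, hx0]
  · simp only [halfWalk, if_true]
    ring

theorem IsPairedAt.halfWalk_succ {θ : ℝ} {t : ℕ} (h : IsPairedAt t (halfWalk θ t)) :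
    IsPairedAt (t + 1) (halfWalk θ (t + 1)) := by
  obtain ⟨hpair, hbdry⟩ := h
  refine ⟨fun x hx => ⟨?_, ?_⟩, fun ht => ?_⟩
  · obtain ⟨h1, h2⟩ := hpair (x + 1) (by rwa [add_right_comm])
    rw [halfWalk_succ_fst, halfWalk_succ_fst, h1, h2]
    ring
  · rcases x with _ | y
    · have hb := hbdry (Nat.even_iff.mpr (by rw [Nat.odd_iff] at hx; omega))
      rw [halfWalk_succ_snd_succ, halfWalk_succ_snd_zero, hb]
      linear_combination (Real.sin θ * (halfWalk θ t).1 0 : ℂ) * I_sq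
    · obtain ⟨h1, h2⟩ := hpair y (Nat.odd_iff.mpr (by rw [Nat.odd_iff] at hx; omega))
      rw [halfWalk_succ_snd_succ, halfWalk_succ_snd_succ, h1, h2]
      ring
  · obtain ⟨h1, h2⟩ := hpair 0 (Nat.odd_iff.mpr (by rw [Nat.even_iff] at ht; omega))
    rw [zero_add] at h1 h2
    rw [halfWalk_succ_snd_zero, halfWalk_succ_fst, h1, h2]
    linear_combination
      (Real.cos θ * (halfWalk θ t).1 0 + Real.sin θ * (halfWalk θ t).2 0 : ℂ) * I_sq

theorem isPairedAt_halfWalk (θ : ℝ) (t : ℕ) : IsPairedAt t (halfWalk θ t) := by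
  induction t with
  | zero => exact isPairedAt_halfWalk_zero θ
  | succ t ih => exact ih.halfWalk_succ

theorem halfWalkProb_succ_eq {θ : ℝ} {t x : ℕ} (hx : Odd (x + t)) :
    halfWalkProb θ t (x + 1) = halfWalkProb θ t x := by
  obtain ⟨h1, h2⟩ := (isPairedAt_halfWalk θ t).1 x hx
  simp [halfWalkProb, h1, h2]

theorem half_line_probability_pairing_general (θ : ℝ) :
    (∀ t : ℕ, 1 ≤ t → ∀ m : ℕ, 1 ≤ m → m ≤ t - 1 →
        ‖(halfWalk θ (2 * t)).1 (2 * (t - m))‖ ^ 2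
            + ‖(halfWalk θ (2 * t)).2 (2 * (t - m))‖ ^ 2
          = ‖(halfWalk θ (2 * t)).1 (2 * (t - m) - 1)‖ ^ 2
            + ‖(halfWalk θ (2 * t)).2 (2 * (t - m) - 1)‖ ^ 2) ∧
    (∀ t : ℕ, ∀ m : ℕ, 1 ≤ m → m ≤ t →
        ‖(halfWalk θ (2 * t + 1)).1 (2 * (t - m) + 1)‖ ^ 2
            + ‖(halfWalk θ (2 * t + 1)).2 (2 * (t - m) + 1)‖ ^ 2
          = ‖(halfWalk θ (2 * t + 1)).1 (2 * (t - m))‖ ^ 2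
            + ‖(halfWalk θ (2 * t + 1)).2 (2 * (t - m))‖ ^ 2) := by
  refine ⟨fun t _ m hm hmt => ?_, fun t m _ _ => ?_⟩
  · have hx : 2 * (t - m) = 2 * (t - m) - 1 + 1 := by omega
    rw [hx]
    exact halfWalkProb_succ_eq (Nat.odd_iff.mpr (by omega))
  · exact halfWalkProb_succ_eq (Nat.odd_iff.mpr (by omega))

theorem half_line_probability_pairing (θ : ℝ) (h0 : θ ≠ 0) (hπ : θ ≠ Real.pi) :
    (∀ t : ℕ, 1 ≤ t → ∀ m : ℕ, 1 ≤ m → m ≤ t - 1 →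
        ‖(halfWalk θ (2 * t)).1 (2 * (t - m))‖ ^ 2
            + ‖(halfWalk θ (2 * t)).2 (2 * (t - m))‖ ^ 2
          = ‖(halfWalk θ (2 * t)).1 (2 * (t - m) - 1)‖ ^ 2
            + ‖(halfWalk θ (2 * t)).2 (2 * (t - m) - 1)‖ ^ 2) ∧
    (∀ t : ℕ, ∀ m : ℕ, 1 ≤ m → m ≤ t →
        ‖(halfWalk θ (2 * t + 1)).1 (2 * (t - m) + 1)‖ ^ 2
            + ‖(halfWalk θ (2 * t + 1)).2 (2 * (t - m) + 1)‖ ^ 2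
          = ‖(halfWalk θ (2 * t + 1)).1 (2 * (t - m))‖ ^ 2
            + ‖(halfWalk θ (2 * t + 1)).2 (2 * (t - m))‖ ^ 2) :=
  half_line_probability_pairing_general θ
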